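/- arXiv:1110.3298 — 2 statements merged into one kernel-verified Lean document; each statement's English description precedes it below -/
import Mathlib

section
/- The real span of the five vector fields X₁ = (1/√(-p)) ∂ₓ, X₂ = ∂ₓ, X₃ = x ∂ₓ - p ∂ₚ, X₄ = x² ∂ₓ - 2xp ∂ₚ, X₅ = (x/√(-p)) ∂ₓ + 2√(-p) ∂ₚ on O = {p < 0} is a 5-dimensional Lie algebra of vector fields, i.e. the five vector fields are linearly independent over ℝ and their span is closed under the Lie bracket. -/
/-!
Every point of `O` is `(x, -s²)` with `s > 0`, and there `√(-p) = s`, so the five fields and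
their Jacobians are rational in `(x, s)`. Computing the brackets then gives
`[X₁,X₃] = ½X₁, [X₁,X₄] = X₅, [X₂,X₃] = X₂, [X₂,X₄] = 2X₃, [X₂,X₅] = X₁, [X₃,X₄] = X₄,
[X₃,X₅] = ½X₅`, all other brackets of basis fields vanishing. Linear independence is seen by
evaluating at three points.
-/

open Real

/-- The half-plane `O = {(x,p) : p < 0}`. -/
def O : Set (ℝ × ℝ) := {z | z.2 < 0}

/-- Lie bracket of vector fields on `ℝ²`: `[V,W] = DW·V - DV·W`. -/
noncomputable def bracket (V W : ℝ × ℝ → ℝ × ℝ) (z : ℝ × ℝ) : ℝ × ℝ :=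
  fderiv ℝ W z (V z) - fderiv ℝ V z (W z)

noncomputable def X₁ : ℝ × ℝ → ℝ × ℝ := fun z => (1 / Real.sqrt (-z.2), 0)
def X₂ : ℝ × ℝ → ℝ × ℝ := fun _ => (1, 0)
def X₃ : ℝ × ℝ → ℝ × ℝ := fun z => (z.1, -z.2)
def X₄ : ℝ × ℝ → ℝ × ℝ := fun z => (z.1 ^ 2, -2 * z.1 * z.2)
noncomputable def X₅ : ℝ × ℝ → ℝ × ℝ :=
  fun z => (z.1 / Real.sqrt (-z.2), 2 * Real.sqrt (-z.2))

noncomputable def XF : Fin 5 → (ℝ × ℝ → ℝ × ℝ) := ![X₁, X₂, X₃, X₄, X₅]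

lemma exists_eq_neg_sq_of_mem_O {z : ℝ × ℝ} (hz : z ∈ O) : ∃ x s : ℝ, 0 < s ∧ z = (x, -s ^ 2) :=
  ⟨z.1, √(-z.2), sqrt_pos.2 (neg_pos.2 hz), by rw [sq_sqrt (neg_pos.2 hz).le, neg_neg]⟩

lemma hasFDerivAt_sqrt_neg_snd {s : ℝ} (hs : 0 < s) (x : ℝ) :
    HasFDerivAt (fun w : ℝ × ℝ => √(-w.2))
      ((-(2 * s)⁻¹) • ContinuousLinearMap.snd ℝ ℝ ℝ) (x, -s ^ 2) := by
  have h : HasFDerivAt (fun w : ℝ × ℝ => -w.2) (-ContinuousLinearMap.snd ℝ ℝ ℝ) (x, -s ^ 2) :=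
    hasFDerivAt_snd.neg
  refine (h.sqrt (by simp [hs.ne'])).congr_fderiv ?_
  ext <;> simp [sqrt_sq hs.le]

lemma hasFDerivAt_inv_sqrt_neg_snd {s : ℝ} (hs : 0 < s) (x : ℝ) :
    HasFDerivAt (fun w : ℝ × ℝ => (√(-w.2))⁻¹)
      ((2 * s ^ 3)⁻¹ • ContinuousLinearMap.snd ℝ ℝ ℝ) (x, -s ^ 2) := by
  have h : HasDerivAt (fun t : ℝ => t⁻¹) (-(s ^ 2)⁻¹) (√(-(x, -s ^ 2).2)) := by
    rw [neg_neg, sqrt_sq hs.le]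
    exact hasDerivAt_inv hs.ne'
  refine (h.comp_hasFDerivAt (x, -s ^ 2) (hasFDerivAt_sqrt_neg_snd hs x)).congr_fderiv ?_
  ext <;> simp
  field_simp

lemma fderiv_X₁_apply {s : ℝ} (hs : 0 < s) (x : ℝ) (v : ℝ × ℝ) :
    fderiv ℝ X₁ (x, -s ^ 2) v = (v.2 / (2 * s ^ 3), 0) := by
  have h := (hasFDerivAt_inv_sqrt_neg_snd hs x).prodMk (hasFDerivAt_const (0 : ℝ) _)
  unfold X₁
  simp only [one_div, h.fderiv]
  simp [div_eq_inv_mul]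

lemma fderiv_X₅_apply {s : ℝ} (hs : 0 < s) (x : ℝ) (v : ℝ × ℝ) :
    fderiv ℝ X₅ (x, -s ^ 2) v = (v.1 / s + x * v.2 / (2 * s ^ 3), -v.2 / s) := by
  have hx : HasFDerivAt (fun w : ℝ × ℝ => w.1) (ContinuousLinearMap.fst ℝ ℝ ℝ) (x, -s ^ 2) :=
    hasFDerivAt_fst
  have h := (hx.fun_mul (hasFDerivAt_inv_sqrt_neg_snd hs x)).prodMk
    ((hasFDerivAt_sqrt_neg_snd hs x).const_mul 2)
  unfold X₅
  simp only [div_eq_mul_inv, h.fderiv]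
  ext <;> simp [sqrt_sq hs.le] <;> ring

lemma fderiv_X₂_apply (z v : ℝ × ℝ) : fderiv ℝ X₂ z v = 0 := by
  unfold X₂
  simp

lemma fderiv_X₃_apply (z v : ℝ × ℝ) : fderiv ℝ X₃ z v = (v.1, -v.2) := by
  have h : HasFDerivAt X₃ _ z :=
    (hasFDerivAt_fst (𝕜 := ℝ) (E := ℝ) (F := ℝ)).prodMk hasFDerivAt_snd.neg
  rw [h.fderiv]
  simp

lemma fderiv_X₄_apply (z v : ℝ × ℝ) :
    fderiv ℝ X₄ z v = (2 * z.1 * v.1, -2 * z.2 * v.1 - 2 * z.1 * v.2) := by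
  have hx : HasFDerivAt (fun w : ℝ × ℝ => w.1) (ContinuousLinearMap.fst ℝ ℝ ℝ) z := hasFDerivAt_fst
  have hp : HasFDerivAt (fun w : ℝ × ℝ => w.2) (ContinuousLinearMap.snd ℝ ℝ ℝ) z := hasFDerivAt_snd
  have h : HasFDerivAt X₄ _ z := (hx.pow 2).prodMk ((hx.const_mul (-2)).mul hp)
  rw [h.fderiv]
  ext <;> simp
  ring

lemma bracket_self (V : ℝ × ℝ → ℝ × ℝ) (z : ℝ × ℝ) : bracket V V z = 0 :=
  sub_self _

lemma bracket_swap (V W : ℝ × ℝ → ℝ × ℝ) (z : ℝ × ℝ) : bracket W V z = -bracket V W z :=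
  (neg_sub _ _).symm

lemma bracket_X₁_X₂ {z : ℝ × ℝ} (hz : z ∈ O) : bracket X₁ X₂ z = 0 := by
  obtain ⟨x, s, hs, rfl⟩ := exists_eq_neg_sq_of_mem_O hz
  rw [bracket, fderiv_X₁_apply hs, fderiv_X₂_apply]
  ext <;> simp [X₂]

lemma bracket_X₁_X₃ {z : ℝ × ℝ} (hz : z ∈ O) : bracket X₁ X₃ z = (1 / 2 : ℝ) • X₁ z := by
  obtain ⟨x, s, hs, rfl⟩ := exists_eq_neg_sq_of_mem_O hz
  rw [bracket, fderiv_X₁_apply hs, fderiv_X₃_apply]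
  ext <;> simp [X₁, X₃, sqrt_sq hs.le]
  field_simp
  ring

lemma bracket_X₁_X₄ {z : ℝ × ℝ} (hz : z ∈ O) : bracket X₁ X₄ z = X₅ z := by
  obtain ⟨x, s, hs, rfl⟩ := exists_eq_neg_sq_of_mem_O hz
  rw [bracket, fderiv_X₁_apply hs, fderiv_X₄_apply]
  ext <;> simp [X₁, X₄, X₅, sqrt_sq hs.le] <;> field_simp
  ring

lemma bracket_X₁_X₅ {z : ℝ × ℝ} (hz : z ∈ O) : bracket X₁ X₅ z = 0 := by
  obtain ⟨x, s, hs, rfl⟩ := exists_eq_neg_sq_of_mem_O hz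
  rw [bracket, fderiv_X₁_apply hs, fderiv_X₅_apply hs]
  ext <;> simp [X₁, X₅, sqrt_sq hs.le]
  field_simp
  ring

lemma bracket_X₂_X₅ {z : ℝ × ℝ} (hz : z ∈ O) : bracket X₂ X₅ z = X₁ z := by
  obtain ⟨x, s, hs, rfl⟩ := exists_eq_neg_sq_of_mem_O hz
  rw [bracket, fderiv_X₂_apply, fderiv_X₅_apply hs]
  ext <;> simp [X₁, X₂, sqrt_sq hs.le]

lemma bracket_X₃_X₅ {z : ℝ × ℝ} (hz : z ∈ O) : bracket X₃ X₅ z = (1 / 2 : ℝ) • X₅ z := by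
  obtain ⟨x, s, hs, rfl⟩ := exists_eq_neg_sq_of_mem_O hz
  rw [bracket, fderiv_X₃_apply, fderiv_X₅_apply hs]
  ext <;> simp [X₃, X₅, sqrt_sq hs.le] <;> field_simp
  ring

lemma bracket_X₄_X₅ {z : ℝ × ℝ} (hz : z ∈ O) : bracket X₄ X₅ z = 0 := by
  obtain ⟨x, s, hs, rfl⟩ := exists_eq_neg_sq_of_mem_O hz
  rw [bracket, fderiv_X₄_apply, fderiv_X₅_apply hs]
  ext <;> simp [X₄, X₅, sqrt_sq hs.le] <;> field_simp <;> ring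

lemma bracket_X₂_X₃ (z : ℝ × ℝ) : bracket X₂ X₃ z = X₂ z := by
  rw [bracket, fderiv_X₂_apply, fderiv_X₃_apply]
  simp [X₂]

lemma bracket_X₂_X₄ (z : ℝ × ℝ) : bracket X₂ X₄ z = (2 : ℝ) • X₃ z := by
  rw [bracket, fderiv_X₂_apply, fderiv_X₄_apply]
  ext <;> simp [X₂, X₃]

lemma bracket_X₃_X₄ (z : ℝ × ℝ) : bracket X₃ X₄ z = X₄ z := by
  rw [bracket, fderiv_X₃_apply, fderiv_X₄_apply]
  ext <;> simp [X₃, X₄] <;> ring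

/-- Entry `i j` is the coordinate vector of `[XF i, XF j]` in the basis `XF`; note `XF 0 = X₁`. -/
noncomputable def structConst : Fin 5 → Fin 5 → Fin 5 → ℝ :=
  ![![0, 0, Pi.single 0 (1 / 2), Pi.single 4 1, 0],
    ![0, 0, Pi.single 1 1, Pi.single 2 2, Pi.single 0 1],
    ![-Pi.single 0 (1 / 2), -Pi.single 1 1, 0, Pi.single 3 1, Pi.single 4 (1 / 2)],
    ![-Pi.single 4 1, -Pi.single 2 2, -Pi.single 3 1, 0, 0],
    ![0, -Pi.single 0 1, -Pi.single 4 (1 / 2), 0, 0]]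

lemma structConst_swap (i j : Fin 5) : structConst j i = -structConst i j := by
  fin_cases i <;> fin_cases j <;> simp [structConst]

lemma bracket_XF_of_lt {z : ℝ × ℝ} (hz : z ∈ O) {i j : Fin 5} (hij : i < j) :
    bracket (XF i) (XF j) z = ∑ k, structConst i j k • XF k z := by
  fin_cases i <;> fin_cases j <;> try (simp at hij; done)
  all_goals simp [structConst, XF, bracket_X₁_X₂ hz, bracket_X₁_X₃ hz,
      bracket_X₁_X₄ hz, bracket_X₁_X₅ hz, bracket_X₂_X₃, bracket_X₂_X₄, bracket_X₂_X₅ hz,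
      bracket_X₃_X₄, bracket_X₃_X₅ hz, bracket_X₄_X₅ hz]

lemma bracket_XF {z : ℝ × ℝ} (hz : z ∈ O) (i j : Fin 5) :
    bracket (XF i) (XF j) z = ∑ k, structConst i j k • XF k z := by
  rcases lt_trichotomy i j with hij | rfl | hij
  · exact bracket_XF_of_lt hz hij
  · fin_cases i <;> simp [bracket_self, structConst]
  · rw [bracket_swap, bracket_XF_of_lt hz hij, structConst_swap]
    simp [Finset.sum_neg_distrib]

lemma linearIndependent_XF_on_O : LinearIndependent ℝ fun i (z : O) => XF i z := by
  rw [Fintype.linearIndependent_iff]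
  intro c hc
  have hc' (z : ℝ × ℝ) (hz : z ∈ O) : ∑ i, c i • XF i z = 0 := by
    simpa only [Finset.sum_apply, Pi.smul_apply, Pi.zero_apply] using congrFun hc ⟨z, hz⟩
  -- At `(0, -1)` and `(0, -4)` only `X₁, X₂` feed the first and only `X₃, X₅` the second
  -- coordinate, with different ratios; `(1, -1)` then isolates `X₄`.
  have h₀₁ := hc' (0, -1) (by norm_num [O])
  have h₀₄ := hc' (0, -4) (by norm_num [O])
  have h₁₁ := hc' (1, -1) (by norm_num [O])
  have sqrt_four : √4 = 2 := by
    rw [show (4 : ℝ) = 2 ^ 2 by norm_num, sqrt_sq zero_le_two]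
  simp [XF, Fin.sum_univ_five, X₁, X₂, X₃, X₄, X₅, sqrt_four, Prod.ext_iff] at h₀₁ h₀₄ h₁₁
  intro i
  fin_cases i <;> simp <;> linarith

/-- `X₁,…,X₅` are linearly independent over `ℝ` and their real span
is closed under the Lie bracket, so they span a 5-dimensional Lie algebra. -/
theorem span_is_five_dim_lie_algebra :
    (∀ c : Fin 5 → ℝ, (∀ z ∈ O, (∑ i, c i • XF i z) = 0) → c = 0) ∧
    (∀ i j : Fin 5, ∃ d : Fin 5 → ℝ, ∀ z ∈ O,
      bracket (XF i) (XF j) z = ∑ k, d k • XF k z) := by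
  refine ⟨fun c hc => ?_, fun i j => ⟨structConst i j, fun z hz => bracket_XF hz i j⟩⟩
  refine funext <| Fintype.linearIndependent_iff.1 linearIndependent_XF_on_O c (funext fun z => ?_)
  simpa only [Finset.sum_apply, Pi.smul_apply, Pi.zero_apply] using hc z z.2
end

section
/- If (x₀(t),p₀(t)), (x₁(t),p₁(t)), (x₂(t),p₂(t)) are three solutions of the system dx/dt = 1/√(-p) - a₀(t) - a₁(t)x - a₂(t)x², dp/dt = p(a₁(t)+2a₂(t)x), with all pᵢ(t) < 0, then t ↦ (x₁-x₂)√(p₁p₂) + (x₂-x₀)√(p₂p₀) + (x₀-x₁)√(p₀p₁) is constant. -/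
/-!
Write `qᵢ = √(-pᵢ)`. The `p`-equation gives `qᵢ' = qᵢ (a₁ + 2a₂xᵢ)/2`, and then the quadratic
terms of the `x`-equation cancel exactly in the derivative of a single pair term:
`((xⱼ - xₖ) qⱼ qₖ)' = qₖ - qⱼ`. These three derivatives telescope to `0` in the cyclic sum.
-/

open Real

theorem hasDerivAt_sqrt_neg {p : ℝ → ℝ} {b t : ℝ} (hp : p t < 0)
    (hpd : HasDerivAt p (p t * b) t) :
    HasDerivAt (fun s => √(-p s)) (√(-p t) * b / 2) t := by
  have hq : √(-p t) ≠ 0 := (sqrt_pos.2 (neg_pos.2 hp)).ne'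
  refine ((hasDerivAt_sqrt (neg_pos.2 hp).ne').comp t hpd.neg).congr_deriv ?_
  field_simp
  linear_combination (-b) * sq_sqrt (neg_pos.2 hp).le

theorem hasDerivAt_sub_mul_sqrt_mul_sqrt {a₀ a₁ a₂ x y p r : ℝ → ℝ} {t : ℝ}
    (hp : p t < 0) (hr : r t < 0)
    (hx : HasDerivAt x (1 / √(-p t) - a₀ t - a₁ t * x t - a₂ t * x t ^ 2) t)
    (hy : HasDerivAt y (1 / √(-r t) - a₀ t - a₁ t * y t - a₂ t * y t ^ 2) t)
    (hpd : HasDerivAt p (p t * (a₁ t + 2 * a₂ t * x t)) t)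
    (hrd : HasDerivAt r (r t * (a₁ t + 2 * a₂ t * y t)) t) :
    HasDerivAt (fun s => (x s - y s) * (√(-p s) * √(-r s))) (√(-r t) - √(-p t)) t := by
  have hqp : √(-p t) ≠ 0 := (sqrt_pos.2 (neg_pos.2 hp)).ne'
  have hqr : √(-r t) ≠ 0 := (sqrt_pos.2 (neg_pos.2 hr)).ne'
  refine ((hx.sub hy).mul ((hasDerivAt_sqrt_neg hp hpd).mul
    (hasDerivAt_sqrt_neg hr hrd))).congr_deriv ?_
  simp only [Pi.mul_apply, Pi.sub_apply]
  field_simp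
  ring

theorem first_integral_along_solutions_general (a₀ a₁ a₂ : ℝ → ℝ)
    (x : Fin 3 → ℝ → ℝ) (p : Fin 3 → ℝ → ℝ)
    (hneg : ∀ i t, p i t < 0)
    (hx : ∀ i t, HasDerivAt (x i)
      (1 / Real.sqrt (-(p i t)) - a₀ t - a₁ t * x i t - a₂ t * (x i t) ^ 2) t)
    (hp : ∀ i t, HasDerivAt (p i) (p i t * (a₁ t + 2 * a₂ t * x i t)) t) :
    ∀ s t : ℝ,
      (x 1 s - x 2 s) * (Real.sqrt (-(p 1 s)) * Real.sqrt (-(p 2 s))) +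
      (x 2 s - x 0 s) * (Real.sqrt (-(p 2 s)) * Real.sqrt (-(p 0 s))) +
      (x 0 s - x 1 s) * (Real.sqrt (-(p 0 s)) * Real.sqrt (-(p 1 s))) =
      (x 1 t - x 2 t) * (Real.sqrt (-(p 1 t)) * Real.sqrt (-(p 2 t))) +
      (x 2 t - x 0 t) * (Real.sqrt (-(p 2 t)) * Real.sqrt (-(p 0 t))) +
      (x 0 t - x 1 t) * (Real.sqrt (-(p 0 t)) * Real.sqrt (-(p 1 t))) := by
  have pair (i j : Fin 3) (t : ℝ) :
      HasDerivAt (fun s => (x i s - x j s) * (√(-p i s) * √(-p j s)))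
        (√(-p j t) - √(-p i t)) t :=
    hasDerivAt_sub_mul_sqrt_mul_sqrt (hneg i t) (hneg j t) (hx i t) (hx j t) (hp i t) (hp j t)
  have cyclic_sum (t : ℝ) : HasDerivAt (fun s =>
      (x 1 s - x 2 s) * (√(-p 1 s) * √(-p 2 s)) + (x 2 s - x 0 s) * (√(-p 2 s) * √(-p 0 s)) +
      (x 0 s - x 1 s) * (√(-p 0 s) * √(-p 1 s))) 0 t :=
    (((pair 1 2 t).add (pair 2 0 t)).add (pair 0 1 t)).congr_deriv (by ring)
  exact is_const_of_deriv_eq_zero (fun t => (cyclic_sum t).differentiableAt)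
    (fun t => (cyclic_sum t).deriv)

/-- along any three solutions of the Hamiltonian system
`dx/dt = 1/√(-p) - a₀(t) - a₁(t)x - a₂(t)x²`, `dp/dt = p(a₁(t)+2a₂(t)x)`
with `pᵢ(t) < 0`, the function
`(x₁-x₂)√(p₁p₂) + (x₂-x₀)√(p₂p₀) + (x₀-x₁)√(p₀p₁)` is constant in `t`. -/
theorem first_integral_along_solutions (a₀ a₁ a₂ : ℝ → ℝ)
    (ha₀ : Continuous a₀) (ha₁ : Continuous a₁) (ha₂ : Continuous a₂)
    (x : Fin 3 → ℝ → ℝ) (p : Fin 3 → ℝ → ℝ)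
    (hneg : ∀ i t, p i t < 0)
    (hx : ∀ i t, HasDerivAt (x i)
      (1 / Real.sqrt (-(p i t)) - a₀ t - a₁ t * x i t - a₂ t * (x i t) ^ 2) t)
    (hp : ∀ i t, HasDerivAt (p i) (p i t * (a₁ t + 2 * a₂ t * x i t)) t) :
    ∀ s t : ℝ,
      (x 1 s - x 2 s) * (Real.sqrt (-(p 1 s)) * Real.sqrt (-(p 2 s))) +
      (x 2 s - x 0 s) * (Real.sqrt (-(p 2 s)) * Real.sqrt (-(p 0 s))) +
      (x 0 s - x 1 s) * (Real.sqrt (-(p 0 s)) * Real.sqrt (-(p 1 s))) =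
      (x 1 t - x 2 t) * (Real.sqrt (-(p 1 t)) * Real.sqrt (-(p 2 t))) +
      (x 2 t - x 0 t) * (Real.sqrt (-(p 2 t)) * Real.sqrt (-(p 0 t))) +
      (x 0 t - x 1 t) * (Real.sqrt (-(p 0 t)) * Real.sqrt (-(p 1 t))) :=
  first_integral_along_solutions_general a₀ a₁ a₂ x p hneg hx hp
end
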